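/- arXiv:1802.02705 — 2 statements merged into one kernel-verified Lean document; each statement's English description precedes it below -/
import Mathlib

section
/- Let R be a commutative ring of prime characteristic p, let 𝔞 be an ideal of R generated by two elements, let q be a power of p, and let k be an integer with 0 < k < p. Then 𝔞^[kq−1] = 𝔞^{kq−1}, i.e., the generalized Frobenius power with exponent kq−1 coincides with the ordinary power. -/
open scoped BigOperators

/-- The `q`-th bracket power of an ideal: the ideal generated by `q`-th powers
of elements of `a`. -/
def bracketPow {R : Type*} [CommRing R] (a : Ideal R) (q : ℕ) : Ideal R :=
  Ideal.span ((fun x => x ^ q) '' (a : Set R))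

/-- The generalized `k`-th Frobenius power of an ideal, defined via the base-`p`
digits of `k`:  `𝔞^[k] = ∏ᵢ (𝔞^[pⁱ])^(kᵢ)` where `kᵢ = k / pⁱ % p` is the `i`-th
base-`p` digit of `k` (digits with index `> k` vanish, so the product below suffices). -/
def frobPow {R : Type*} [CommRing R] (p : ℕ) (a : Ideal R) (k : ℕ) : Ideal R :=
  ∏ i ∈ Finset.range (k + 1), bracketPow a (p ^ i) ^ (k / p ^ i % p)

/-!
Peeling off the lowest base-`p` digit gives `𝔞^[pm + r] = 𝔞^r (𝔞^[p])^[m]` for `r < p`, and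
`kq - 1 = p (k(q/p) - 1) + (p - 1)`. In characteristic `p` the ideal `𝔞 = (f) + (g)` has
`𝔞^[p] = (f)^p + (g)^p`, again two-generated, so by induction on `q` everything reduces to
`(I + J)^(pm + p - 1) = (I + J)^(p-1) (I^p + J^p)^m` for arbitrary ideals `I, J`. By induction on
`m` this reduces to `m = 1`, where each term `I^i J^j` of `(I + J)^(2p-1)` has `i ≥ p` or
`j ≥ p`.
-/

open Ideal Finset

namespace Ideal

variable {R : Type*} [CommSemiring R]

lemma pow_mul_pow_le_sup_pow (I J : Ideal R) (c d : ℕ) : I ^ c * J ^ d ≤ (I ⊔ J) ^ (c + d) :=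
  pow_add (I ⊔ J) c d ▸
    mul_le_mul' (pow_right_mono le_sup_left c) (pow_right_mono le_sup_right d)

lemma sup_pow_add_pred_le (I J : Ideal R) (p : ℕ) :
    (I ⊔ J) ^ (p + (p - 1)) ≤ (I ⊔ J) ^ (p - 1) * (I ^ p ⊔ J ^ p) := by
  rw [← add_eq_sup, add_pow, sum_eq_sup, add_eq_sup]
  refine Finset.sup_le fun i hi => mul_le_left.trans ?_
  rw [mem_range] at hi
  by_cases hpi : p ≤ i
  · obtain ⟨c, rfl⟩ := Nat.exists_eq_add_of_le hpi
    calc I ^ (p + c) * J ^ (p + (p - 1) - (p + c))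
        = I ^ p * (I ^ c * J ^ (p + (p - 1) - (p + c))) := by rw [pow_add, mul_assoc]
      _ ≤ (I ^ p ⊔ J ^ p) * (I ⊔ J) ^ (p - 1) :=
          mul_le_mul' le_sup_left ((pow_mul_pow_le_sup_pow I J _ _).trans_eq (by congr 1; omega))
      _ = _ := mul_comm _ _
  · obtain ⟨d, hd⟩ : ∃ d, p + (p - 1) - i = p + d := ⟨p - 1 - i, by omega⟩
    calc I ^ i * J ^ (p + (p - 1) - i) = J ^ p * (I ^ i * J ^ d) := by rw [hd, pow_add]; ring
      _ ≤ (I ^ p ⊔ J ^ p) * (I ⊔ J) ^ (p - 1) :=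
          mul_le_mul' le_sup_right ((pow_mul_pow_le_sup_pow I J _ _).trans_eq (by congr 1; omega))
      _ = _ := mul_comm _ _

lemma sup_pow_mul_add_pred (I J : Ideal R) (p m : ℕ) :
    (I ⊔ J) ^ (p * m + (p - 1)) = (I ⊔ J) ^ (p - 1) * (I ^ p ⊔ J ^ p) ^ m := by
  apply le_antisymm
  · induction m with
    | zero => simp
    | succ m ih =>
      calc (I ⊔ J) ^ (p * (m + 1) + (p - 1))
          = (I ⊔ J) ^ (p * m) * (I ⊔ J) ^ (p + (p - 1)) := by rw [← pow_add]; ring_nf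
        _ ≤ (I ⊔ J) ^ (p * m) * ((I ⊔ J) ^ (p - 1) * (I ^ p ⊔ J ^ p)) :=
            mul_le_mul_right (sup_pow_add_pred_le I J p) _
        _ = (I ⊔ J) ^ (p * m + (p - 1)) * (I ^ p ⊔ J ^ p) := by rw [pow_add]; ring
        _ ≤ (I ⊔ J) ^ (p - 1) * (I ^ p ⊔ J ^ p) ^ m * (I ^ p ⊔ J ^ p) :=
            mul_le_mul_left ih _
        _ = (I ⊔ J) ^ (p - 1) * (I ^ p ⊔ J ^ p) ^ (m + 1) := by ring
  · have hle : I ^ p ⊔ J ^ p ≤ (I ⊔ J) ^ p :=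
      sup_le (pow_right_mono le_sup_left p) (pow_right_mono le_sup_right p)
    calc (I ⊔ J) ^ (p - 1) * (I ^ p ⊔ J ^ p) ^ m
        ≤ (I ⊔ J) ^ (p - 1) * ((I ⊔ J) ^ p) ^ m :=
          mul_le_mul_right (pow_right_mono hle m) _
      _ = (I ⊔ J) ^ (p * m + (p - 1)) := by rw [← pow_mul, ← pow_add, add_comm]

end Ideal

section Frobenius

variable {R : Type*} [CommRing R]

lemma bracketPow_one (a : Ideal R) : bracketPow a 1 = a := by
  simp [bracketPow]

variable (p : ℕ)

lemma bracketPow_pow_eq_map [ExpChar R p] (a : Ideal R) (n : ℕ) :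
    bracketPow a (p ^ n) = a.map (iterateFrobenius R p n) :=
  rfl

lemma bracketPow_bracketPow_pow [ExpChar R p] (a : Ideal R) (m n : ℕ) :
    bracketPow (bracketPow a (p ^ m)) (p ^ n) = bracketPow a (p ^ (m + n)) := by
  simp only [bracketPow_pow_eq_map]
  rw [Ideal.map_map, add_comm m, iterateFrobenius_add]

lemma bracketPow_span [ExpChar R p] (s : Set R) (n : ℕ) :
    bracketPow (span s) (p ^ n) = span ((· ^ p ^ n) '' s) := by
  rw [bracketPow_pow_eq_map, map_span]
  rfl

lemma frobPow_of_lt (a : Ideal R) {n : ℕ} (hn : n < p) : frobPow p a n = a ^ n := by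
  rw [frobPow, prod_range_succ', prod_eq_one, pow_zero, bracketPow_one, Nat.div_one,
    Nat.mod_eq_of_lt hn, one_mul]
  intro i _
  rw [Nat.div_eq_of_lt (hn.trans_le (Nat.le_self_pow i.succ_ne_zero p)), Nat.zero_mod, pow_zero]

lemma frobPow_eq_prod_range (hp : 1 < p) (a : Ideal R) {n N : ℕ} (hN : n < p ^ N) :
    frobPow p a n = ∏ i ∈ range N, bracketPow a (p ^ i) ^ (n / p ^ i % p) := by
  have hvanish : ∀ i, n < p ^ i → bracketPow a (p ^ i) ^ (n / p ^ i % p) = 1 := fun i hi => by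
    rw [Nat.div_eq_of_lt hi, Nat.zero_mod, pow_zero]
  have extend : ∀ {M}, n < p ^ M → ∀ K, M ≤ K →
      ∏ i ∈ range M, bracketPow a (p ^ i) ^ (n / p ^ i % p) =
        ∏ i ∈ range K, bracketPow a (p ^ i) ^ (n / p ^ i % p) := fun hM K hMK =>
    prod_subset (range_subset_range.2 hMK) fun i _ hi =>
      hvanish i (hM.trans_le (Nat.pow_le_pow_right hp.le (by simpa using hi)))
  have hn : n < p ^ (n + 1) := (Nat.lt_pow_self hp).trans (Nat.pow_lt_pow_right hp n.lt_succ_self)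
  rw [frobPow, extend hn (n + 1 + N) (by omega), extend hN (n + 1 + N) (by omega)]

lemma frobPow_mul_add [ExpChar R p] (hp : 1 < p) (a : Ideal R) (m : ℕ) {r : ℕ} (hr : r < p) :
    frobPow p a (p * m + r) = a ^ r * frobPow p (bracketPow a p) m := by
  have hlt : p * m + r < p ^ (m + 2) := calc
    p * m + r < p * (m + 1) := by rw [mul_add_one]; omega
    _ ≤ p * p ^ (m + 1) := Nat.mul_le_mul_left p (Nat.lt_pow_self hp).le
    _ = p ^ (m + 2) := (pow_succ' p _).symm
  rw [frobPow_eq_prod_range p hp a hlt, prod_range_succ', mul_comm, pow_zero, bracketPow_one,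
    Nat.div_one, Nat.mul_add_mod, Nat.mod_eq_of_lt hr, frobPow]
  congr 1
  refine prod_congr rfl fun i _ => ?_
  rw [add_comm i 1, ← bracketPow_bracketPow_pow p a 1 i, pow_add, pow_one,
    ← Nat.div_div_eq_div_mul, Nat.mul_add_div (by omega), Nat.div_eq_of_lt hr, add_zero]

lemma frobPow_span_pair_mul_add_pred [ExpChar R p] (hp : 1 < p)
    (f g : R) (m : ℕ) (h : frobPow p (span {f ^ p, g ^ p}) m = span {f ^ p, g ^ p} ^ m) :
    frobPow p (span {f, g}) (p * m + (p - 1)) = span {f, g} ^ (p * m + (p - 1)) := by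
  have hbracket : bracketPow (span {f, g}) p = span {f ^ p, g ^ p} := by
    simpa [Set.image_pair] using bracketPow_span p {f, g} 1
  rw [frobPow_mul_add p hp _ m (by omega), hbracket, h, span_insert, span_insert (f ^ p),
    ← span_singleton_pow, ← span_singleton_pow, sup_pow_mul_add_pred]

end Frobenius

theorem stmt_8_general {R : Type*} [CommRing R] (p : ℕ) (hp : p.Prime) [CharP R p]
    (a : Ideal R) (hgen : ∃ f g : R, a = Ideal.span {f, g})
    (e k : ℕ) (hkp : k < p) :
    frobPow p a (k * p ^ e - 1) = a ^ (k * p ^ e - 1) := by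
  have := ExpChar.prime (R := R) hp
  obtain ⟨f, g, rfl⟩ := hgen
  rcases Nat.eq_zero_or_pos k with rfl | hk0
  · simpa using frobPow_of_lt p (span {f, g}) hp.pos
  induction e generalizing f g with
  | zero => simpa using frobPow_of_lt p (span {f, g}) (n := k - 1) (by omega)
  | succ e ih =>
    have hexp : k * p ^ (e + 1) - 1 = p * (k * p ^ e - 1) + (p - 1) := by
      have hq : 1 ≤ k * p ^ e := Nat.mul_pos hk0 (pow_pos hp.pos e)
      have := Nat.mul_le_mul_right p hq
      rw [pow_succ, ← mul_assoc, Nat.mul_sub_one, mul_comm p]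
      omega
    rw [hexp]
    exact frobPow_span_pair_mul_add_pred p hp.one_lt f g _ (ih _ _)

theorem stmt_8 {R : Type*} [CommRing R] (p : ℕ) (hp : p.Prime) [CharP R p]
    (a : Ideal R) (hgen : ∃ f g : R, a = Ideal.span {f, g})
    (e k : ℕ) (hk0 : 0 < k) (hkp : k < p) :
    frobPow p a (k * p ^ e - 1) = a ^ (k * p ^ e - 1) :=
  stmt_8_general p hp a hgen e k hkp
end

section
/- Let R be a commutative ring of prime characteristic p and 𝔞 an ideal of R generated by m elements. Then for every power q of p and every integer k ≥ −1, one has 𝔞^{(m+k)q} = 𝔞^{(m−1)q} · (𝔞^[q])^{k+1}, where 𝔞^[q] is the ideal generated by q-th powers of elements of 𝔞. -/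
/-!
Write `𝔞 = (x) + 𝔟` with `𝔟` generated by `n` elements and expand `𝔞^{q + nq}` binomially:
each term contains either `(x)^q ⊆ 𝔞^[q]` or `𝔟^{nq}`, and by induction on the number of
generators `𝔟^{nq} ⊆ 𝔟^{(n-1)q} 𝔟^[q]`. Hence `𝔞^{nq + q} = 𝔞^{nq} 𝔞^[q]` when `𝔞` has `n + 1`
generators, the reverse inclusion coming from `𝔞^[q] ⊆ 𝔞^q`; iterating this identity `j` times
gives the theorem. The zero ideal counts as generated by the single element `0`.
-/

open scoped BigOperators

open Ideal Set

lemma pow_add_mul_eq_of_pow_add_eq {M : Type*} [CommMonoid M] {x y : M} {k q : ℕ}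
    (h : x ^ (k + q) = x ^ k * y) (j : ℕ) : x ^ (k + j * q) = x ^ k * y ^ j := by
  induction j with
  | zero => simp
  | succ j ih =>
    calc x ^ (k + (j + 1) * q) = x ^ (k + j * q) * x ^ q := by
          rw [← pow_add, Nat.succ_mul, add_assoc]
      _ = x ^ (k + q) * y ^ j := by rw [ih, pow_add x k q]; ac_rfl
      _ = x ^ k * y ^ (j + 1) := by rw [h, pow_succ', mul_assoc]

lemma Ideal.sup_pow_add_le {R : Type*} [CommSemiring R] (I J : Ideal R) (n m : ℕ) :
    (I ⊔ J) ^ (n + m) ≤ I ^ n * (I ⊔ J) ^ m ⊔ J ^ m * (I ⊔ J) ^ n := by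
  rw [show (I ⊔ J) ^ (n + m) = (I + J) ^ (n + m) from rfl, add_pow, sum_eq_sup]
  refine Finset.sup_le fun i hi => mul_le_left.trans ?_
  rw [Finset.mem_range, Nat.lt_succ_iff] at hi
  by_cases hn : n ≤ i
  · obtain ⟨k, rfl⟩ := Nat.exists_eq_add_of_le hn
    refine le_sup_of_le_left ?_
    calc I ^ (n + k) * J ^ (n + m - (n + k)) ≤ I ^ n * ((I ⊔ J) ^ k * (I ⊔ J) ^ (m - k)) := by
          rw [pow_add, mul_assoc, Nat.add_sub_add_left]
          exact mul_mono_right (mul_mono (pow_right_mono le_sup_left k)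
            (pow_right_mono le_sup_right _))
      _ = I ^ n * (I ⊔ J) ^ m := by rw [← pow_add, Nat.add_sub_of_le (by omega)]
  · obtain ⟨k, hk⟩ : ∃ k, n + m - i = m + k := ⟨n - i, by omega⟩
    refine le_sup_of_le_right ?_
    calc I ^ i * J ^ (n + m - i) ≤ J ^ m * ((I ⊔ J) ^ i * (I ⊔ J) ^ k) := by
          rw [hk, pow_add, mul_left_comm]
          exact mul_mono_right (mul_mono (pow_right_mono le_sup_left i)
            (pow_right_mono le_sup_right k))
      _ = J ^ m * (I ⊔ J) ^ n := by rw [← pow_add, show i + k = n by omega]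

lemma exists_span_range_fin_pred_succ {R : Type*} [CommSemiring R] :
    ∀ {m : ℕ} (g : Fin m → R), ∃ g' : Fin (m - 1 + 1) → R, span (range g') = span (range g)
  | 0, _ => ⟨0, by simp⟩
  | _ + 1, g => ⟨g, rfl⟩

section BracketPow

variable {R : Type*} [CommRing R]

lemma pow_mem_bracketPow {a : Ideal R} {x : R} (hx : x ∈ a) (q : ℕ) :
    x ^ q ∈ bracketPow a q :=
  subset_span ⟨x, hx, rfl⟩

lemma bracketPow_mono {a b : Ideal R} (h : a ≤ b) (q : ℕ) :
    bracketPow a q ≤ bracketPow b q :=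
  span_mono (image_mono h)

lemma bracketPow_le_pow (a : Ideal R) (q : ℕ) : bracketPow a q ≤ a ^ q := by
  rw [bracketPow, span_le]
  rintro _ ⟨x, hx, rfl⟩
  exact pow_mem_pow hx q

lemma span_singleton_pow_le_bracketPow {a : Ideal R} {x : R} (hx : x ∈ a) (q : ℕ) :
    span {x} ^ q ≤ bracketPow a q := by
  rw [span_singleton_pow, span_le, singleton_subset_iff]
  exact pow_mem_bracketPow hx q

lemma pow_mul_bracketPow_le (a : Ideal R) (k q : ℕ) :
    a ^ k * bracketPow a q ≤ a ^ (k + q) :=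
  pow_add a k q ▸ mul_mono_right (bracketPow_le_pow a q)

lemma span_range_pow_add_le_pow_mul_bracketPow (q : ℕ) :
    ∀ {n : ℕ} (g : Fin (n + 1) → R),
      span (range g) ^ (n * q + q) ≤ span (range g) ^ (n * q) * bracketPow (span (range g)) q
  | 0, g => by
    rw [zero_mul, Nat.zero_add q, pow_zero, one_mul,
      show range g = {g 0} from range_unique (ι := Fin 1)]
    exact span_singleton_pow_le_bracketPow (mem_span_singleton_self _) q
  | n + 1, g => by
    set a := span (range g)
    set b := span (range (Fin.tail g))
    have hab : a = span {g 0} ⊔ b := by rw [← span_insert, ← Fin.range_fin_succ]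
    have hba : b ≤ a := hab ▸ le_sup_right
    have hg0 : g 0 ∈ a := subset_span (mem_range_self 0)
    have hb : b ^ (n * q + q) * a ^ q ≤ a ^ (n * q + q) * bracketPow a q :=
      calc b ^ (n * q + q) * a ^ q ≤ a ^ (n * q) * bracketPow a q * a ^ q :=
            mul_mono_left ((span_range_pow_add_le_pow_mul_bracketPow q (Fin.tail g)).trans
              (mul_mono (pow_right_mono hba _) (bracketPow_mono hba q)))
        _ = a ^ (n * q + q) * bracketPow a q := by rw [pow_add]; ring
    rw [Nat.succ_mul]
    calc a ^ (n * q + q + q) ≤ span {g 0} ^ q * a ^ (n * q + q) ⊔ b ^ (n * q + q) * a ^ q := by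
          rw [add_comm, hab]
          exact sup_pow_add_le _ _ _ _
      _ ≤ a ^ (n * q + q) * bracketPow a q := by
          refine sup_le ?_ hb
          rw [mul_comm]
          exact mul_mono_right (span_singleton_pow_le_bracketPow hg0 q)

end BracketPow

-- `j` stands for `k + 1`, so that `k ≥ -1` ranges over `ℕ`.
theorem stmt_10_general {R : Type*} [CommRing R] (p : ℕ)
    (m : ℕ) (a : Ideal R) (g : Fin m → R) (hg : a = Ideal.span (Set.range g))
    (e j : ℕ) :
    a ^ ((m - 1 + j) * p ^ e) = a ^ ((m - 1) * p ^ e) * bracketPow a (p ^ e) ^ j := by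
  obtain ⟨g', hg'⟩ := exists_span_range_fin_pred_succ g
  have pigeonhole :
      a ^ ((m - 1) * p ^ e + p ^ e) = a ^ ((m - 1) * p ^ e) * bracketPow a (p ^ e) := by
    rw [hg, ← hg']
    exact le_antisymm (span_range_pow_add_le_pow_mul_bracketPow _ g') (pow_mul_bracketPow_le _ _ _)
  rw [add_mul]
  exact pow_add_mul_eq_of_pow_add_eq pigeonhole j

/-- For an ideal generated by `m` elements, the pigeonhole identity
`𝔞^{(m+k)q} = 𝔞^{(m−1)q} · (𝔞^[q])^{k+1}` holds for every integer `k ≥ −1`; writing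
`j = k + 1 ∈ ℕ`, this reads `𝔞^{(m−1+j)q} = 𝔞^{(m−1)q} · (𝔞^[q])^j`. -/
theorem stmt_10 {R : Type*} [CommRing R] (p : ℕ) (hp : p.Prime) [CharP R p]
    (m : ℕ) (a : Ideal R) (g : Fin m → R) (hg : a = Ideal.span (Set.range g))
    (e j : ℕ) :
    a ^ ((m - 1 + j) * p ^ e) = a ^ ((m - 1) * p ^ e) * bracketPow a (p ^ e) ^ j :=
  stmt_10_general p m a g hg e j
end
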